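/- Let (V, d_T) be a finite tree metric in which all pairwise distances between distinct pairs are distinct. Let E be a set of edges over V such that the graph (V, E) is connected, and let M = MST(E, d_T) be its minimum spanning tree. If the total d_T-weight of M is strictly greater than the total d_T-weight of MST(V, d_T), the minimum spanning tree over the complete graph on V, then there exist vertices u, v, w ∈ V such that u ≺ (v,w), {v, u} ∈ M, and {v, w} ∈ M, where u ≺ (v,w) means d_T(u,v) < d_T(v,w) and d_T(u,w) < d_T(v,w). -/

import Mathlib

/-- The tree metric: the weighted length of the unique path between `x` and `y`
in the tree `G` with edge weights `f`. -/
noncomputable def treeDist {W : Type} (G : SimpleGraph W) (hG : G.IsTree) (f : Sym2 W → ℝ)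
    (x y : W) : ℝ :=
  ((hG.existsUnique_path x y).choose.edges.map f).sum

/-- `d` is a tree metric: it is the restriction to `V` of the path metric of a finite
weighted tree with positive edge weights. -/
def IsTreeMetric {V : Type} (d : V → V → ℝ) : Prop :=
  ∃ (W : Type) (_ : Fintype W) (G : SimpleGraph W) (hG : G.IsTree) (f : Sym2 W → ℝ)
    (ι : V → W), (∀ e ∈ G.edgeSet, 0 < f e) ∧ Function.Injective ι ∧
      ∀ x y, d x y = treeDist G hG f (ι x) (ι y)

/-- All pairwise distances between distinct pairs are distinct: two distinct pairs can only
have equal distance if they are the same unordered pair. -/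
def DistinctDists {V : Type} (d : V → V → ℝ) : Prop :=
  ∀ x y x' y' : V, x ≠ y → x' ≠ y' → d x y = d x' y' → s(x, y) = s(x', y')

/-- The weight of an unordered edge under the (symmetric) distance `d`. -/
noncomputable def sym2Weight {V : Type} (d : V → V → ℝ) : Sym2 V → ℝ :=
  Sym2.lift ⟨fun x y => (d x y + d y x) / 2, fun _ _ => by ring⟩

/-- The total `d`-weight of a finite set of edges. -/
noncomputable def edgesWeight {V : Type} (d : V → V → ℝ) (E : Finset (Sym2 V)) : ℝ :=
  ∑ e ∈ E, sym2Weight d e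

/-- `E` is the edge set of a spanning tree on `V`: it has no loops and the resulting
graph is connected and acyclic. -/
def IsSpanningTreeEdges {V : Type} (E : Set (Sym2 V)) : Prop :=
  (∀ e ∈ E, ¬ e.IsDiag) ∧ (SimpleGraph.fromEdgeSet E).IsTree

/-- `M` is a minimum spanning tree using only edges from `Base`, with edge weights `d`:
it is a spanning tree contained in `Base` minimizing the total weight among all such
spanning trees.  Taking `Base = Set.univ` gives the MST over the complete graph on `V`. -/
def IsMSTOver {V : Type} [Fintype V] [DecidableEq V] (d : V → V → ℝ)
    (Base : Set (Sym2 V)) (M : Finset (Sym2 V)) : Prop :=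
  ↑M ⊆ Base ∧ IsSpanningTreeEdges (↑M : Set (Sym2 V)) ∧
    ∀ E : Finset (Sym2 V), ↑E ⊆ Base → IsSpanningTreeEdges (↑E : Set (Sym2 V)) →
      edgesWeight d M ≤ edgesWeight d E

/-! If `M` has no such triple then, by distinctness of distances, any two edges `va, vb` of `M`
at a common vertex satisfy `d v a < d a b` and `d v b < d a b`. Through the four-point condition
of tree metrics this propagates along paths: if `x, y` are at least two steps apart in `M`, then
`d x y` exceeds the weight of every edge on the `M`-path between them. As `Mg ≠ M`, some edge `xy`
of `Mg` is not in `M`; the `M`-path from `x` to `y` has an edge `f` joining the two components of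
`Mg - xy`, and `Mg - xy + f` is a strictly lighter spanning tree. -/

open SimpleGraph

namespace SimpleGraph

variable {W : Type} {G : SimpleGraph W}

theorem Walk.reachable_deleteEdges_of_mem_support [DecidableEq W] {a b x y : W} {e : Sym2 W}
    (p : G.Walk a b) (he : e ∉ p.edges) (hx : x ∈ p.support) (hy : y ∈ p.support) :
    (G.deleteEdges {e}).Reachable x y := by
  let p' := p.toDeleteEdge e he
  have hx' : x ∈ p'.support := by simpa [p'] using hx
  have hy' : y ∈ p'.support := by simpa [p'] using hy
  exact (Reachable.symm ⟨p'.takeUntil x hx'⟩).trans ⟨p'.takeUntil y hy'⟩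

theorem IsAcyclic.support_subset_of_isPath [DecidableEq W] (hG : G.IsAcyclic) {x y : W}
    {p : G.Walk x y} (hp : p.IsPath) (q : G.Walk x y) : p.support ⊆ q.support := by
  have : p = q.bypass :=
    congrArg Subtype.val ((hG.subsingleton_path x y).elim ⟨p, hp⟩ ⟨_, q.bypass_isPath⟩)
  exact this ▸ q.support_bypass_subset_support

theorem IsAcyclic.exists_mem_support_or_exists_mem_support [DecidableEq W] (hG : G.IsAcyclic)
    {a b c z : W} (pab : G.Walk a b) (pbc : G.Walk b c) (pcz : G.Walk c z) {paz : G.Walk a z}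
    (haz : paz.IsPath) :
    (∃ m ∈ pab.support, m ∈ pcz.support) ∨ ∃ m ∈ paz.support, m ∈ pbc.support := by
  by_contra! ⟨hab_cz, haz_bc⟩
  obtain ⟨⟨⟨u, v⟩, huv⟩, hd, hu, hv⟩ := paz.exists_boundary_dart {m | m ∈ pab.support}
    pab.start_mem_support fun hz => hab_cz z hz pcz.end_mem_support
  have hu_az : u ∈ paz.support := paz.dart_fst_mem_support_of_mem_darts hd
  have hv_az : v ∈ paz.support := paz.dart_snd_mem_support_of_mem_darts hd
  have hv_cz : v ∈ pcz.support := by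
    have := hG.support_subset_of_isPath haz (pab.append (pbc.append pcz)) hv_az
    simp only [Walk.mem_support_append_iff] at this
    exact ((this.resolve_left hv).resolve_left (haz_bc v hv_az))
  -- The edge `uv` is a bridge, yet `u ~ b ~ c ~ v` avoids it.
  refine isBridge_iff.mp (isAcyclic_iff_forall_adj_isBridge.mp hG huv) ?_
  have hu_bc : u ∉ pbc.support := haz_bc u hu_az
  have hu_cz : u ∉ pcz.support := hab_cz u hu
  have hub : (G.deleteEdges {s(u, v)}).Reachable u b := pab.reachable_deleteEdges_of_mem_support
    (fun h => hv (pab.snd_mem_support_of_mem_edges h)) hu pab.end_mem_support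
  have hbc : (G.deleteEdges {s(u, v)}).Reachable b c := pbc.reachable_deleteEdges_of_mem_support
    (fun h => hu_bc (pbc.fst_mem_support_of_mem_edges h)) pbc.start_mem_support pbc.end_mem_support
  have hcv : (G.deleteEdges {s(u, v)}).Reachable c v := pcz.reachable_deleteEdges_of_mem_support
    (fun h => hu_cz (pcz.fst_mem_support_of_mem_edges h)) pcz.start_mem_support hv_cz
  exact (hub.trans hbc).trans hcv

end SimpleGraph

section TreeDist

variable {W : Type} {G : SimpleGraph W} (hG : G.IsTree) (f : Sym2 W → ℝ)

theorem treeDist_eq_of_isPath {a b : W} {p : G.Walk a b} (hp : p.IsPath) :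
    treeDist G hG f a b = (p.edges.map f).sum := by
  rw [treeDist, (hG.existsUnique_path a b).choose_spec.2 p hp]

theorem treeDist_comm (a b : W) : treeDist G hG f a b = treeDist G hG f b a := by
  obtain ⟨p, hp, -⟩ := hG.existsUnique_path a b
  rw [treeDist_eq_of_isPath hG f hp, treeDist_eq_of_isPath hG f hp.reverse,
    Walk.edges_reverse, List.map_reverse, List.sum_reverse]

theorem treeDist_eq_add_of_mem_support [DecidableEq W] {a b m : W} {p : G.Walk a b}
    (hp : p.IsPath) (hm : m ∈ p.support) :
    treeDist G hG f a b = treeDist G hG f a m + treeDist G hG f m b := by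
  rw [treeDist_eq_of_isPath hG f hp, treeDist_eq_of_isPath hG f (hp.takeUntil hm),
    treeDist_eq_of_isPath hG f (hp.dropUntil hm), ← List.sum_append, ← List.map_append,
    ← Walk.edges_append, p.take_spec hm]

variable {f} (hf : ∀ e ∈ G.edgeSet, 0 ≤ f e)
include hf

theorem treeDist_le_sum_edges [DecidableEq W] {a b : W} (p : G.Walk a b) :
    treeDist G hG f a b ≤ (p.edges.map f).sum := by
  rw [treeDist_eq_of_isPath hG f p.bypass_isPath]
  refine (p.edges_bypass_sublist_edges.map f).sum_le_sum ?_
  simp only [List.mem_map]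
  rintro _ ⟨e, he, rfl⟩
  exact hf e (p.edges_subset_edgeSet he)

theorem treeDist_triangle (a m b : W) :
    treeDist G hG f a b ≤ treeDist G hG f a m + treeDist G hG f m b := by
  classical
  obtain ⟨p, hp, -⟩ := hG.existsUnique_path a m
  obtain ⟨q, hq, -⟩ := hG.existsUnique_path m b
  rw [treeDist_eq_of_isPath hG f hp, treeDist_eq_of_isPath hG f hq, ← List.sum_append,
    ← List.map_append, ← Walk.edges_append]
  exact treeDist_le_sum_edges hG hf _

theorem treeDist_add_le_of_mem_support [DecidableEq W] {a b c e m : W} {p : G.Walk a b}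
    {q : G.Walk c e} (hp : p.IsPath) (hq : q.IsPath) (hmp : m ∈ p.support)
    (hmq : m ∈ q.support) :
    treeDist G hG f a c + treeDist G hG f b e ≤ treeDist G hG f a b + treeDist G hG f c e := by
  rw [treeDist_eq_add_of_mem_support hG f hp hmp, treeDist_eq_add_of_mem_support hG f hq hmq,
    treeDist_comm hG f c m]
  linarith [treeDist_triangle hG hf a m c, treeDist_triangle hG hf b m e, treeDist_comm hG f b m]

theorem treeDist_four_point (a b c e : W) :
    treeDist G hG f a c + treeDist G hG f b e ≤
      max (treeDist G hG f a b + treeDist G hG f c e)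
        (treeDist G hG f a e + treeDist G hG f b c) := by
  classical
  obtain ⟨pab, hab, -⟩ := hG.existsUnique_path a b
  obtain ⟨pbc, hbc, -⟩ := hG.existsUnique_path b c
  obtain ⟨pce, hce, -⟩ := hG.existsUnique_path c e
  obtain ⟨pae, hae, -⟩ := hG.existsUnique_path a e
  rcases hG.isAcyclic.exists_mem_support_or_exists_mem_support pab pbc pce hae with
    ⟨m, hm, hm'⟩ | ⟨m, hm, hm'⟩
  · exact le_max_of_le_left (treeDist_add_le_of_mem_support hG hf hab hce hm hm')
  · have := treeDist_add_le_of_mem_support hG hf hae hbc.reverse hm (by simpa using hm')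
    rw [treeDist_comm hG f e b, treeDist_comm hG f c b] at this
    exact le_max_of_le_right this

end TreeDist

theorem IsTreeMetric.symm {V : Type} {d : V → V → ℝ} (htm : IsTreeMetric d) (x y : V) :
    d x y = d y x := by
  obtain ⟨W, _, G, hG, f, ι, -, -, hd⟩ := htm
  rw [hd, hd, treeDist_comm]

theorem IsTreeMetric.four_point {V : Type} {d : V → V → ℝ} (htm : IsTreeMetric d)
    (a b c e : V) : d a c + d b e ≤ max (d a b + d c e) (d a e + d b c) := by
  obtain ⟨W, _, G, hG, f, ι, hf, -, hd⟩ := htm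
  simp only [hd]
  exact treeDist_four_point hG (fun e he => (hf e he).le) _ _ _ _

namespace SimpleGraph

variable {V : Type} {G : SimpleGraph V}

theorem Reachable.deleteEdges_or {x y z : V} (h : G.Reachable x z) :
    (G.deleteEdges {s(x, y)}).Reachable x z ∨ (G.deleteEdges {s(x, y)}).Reachable y z := by
  by_contra! hz
  obtain ⟨p⟩ := h
  obtain ⟨⟨⟨a, b⟩, hab⟩, -, ha, hb⟩ := p.exists_boundary_dart
    {w | (G.deleteEdges {s(x, y)}).Reachable x w ∨ (G.deleteEdges {s(x, y)}).Reachable y w}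
    (Or.inl .rfl) (not_or.mpr hz)
  by_cases he : s(a, b) = s(x, y)
  · rcases Sym2.eq_iff.mp he with ⟨-, rfl⟩ | ⟨-, rfl⟩
    exacts [hb (Or.inr .rfl), hb (Or.inl .rfl)]
  · have hab' : (G.deleteEdges {s(x, y)}).Adj a b := (deleteEdges_adj ..).mpr ⟨hab, he⟩
    exact hb (ha.imp (·.trans hab'.reachable) (·.trans hab'.reachable))

end SimpleGraph

section SpanningTree

variable {V : Type}

theorem isSpanningTreeEdges_iff_connected_and_card [Finite V] {F : Finset (Sym2 V)}
    (hF : ∀ e ∈ (F : Set (Sym2 V)), ¬ e.IsDiag) :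
    IsSpanningTreeEdges (F : Set (Sym2 V)) ↔
      (fromEdgeSet (F : Set (Sym2 V))).Connected ∧ F.card + 1 = Nat.card V := by
  have hcard : Nat.card (fromEdgeSet (F : Set (Sym2 V))).edgeSet = F.card := by
    rw [edgeSet_fromEdgeSet, sdiff_eq_left.mpr (Set.disjoint_left.mpr fun e he hd =>
      hF e he (Sym2.mem_diagSet.mp hd)), Nat.card_coe_set_eq, Set.ncard_coe_finset]
  rw [IsSpanningTreeEdges, isTree_iff_connected_and_card, hcard]
  exact and_iff_right hF

theorem IsSpanningTreeEdges.card_add_one [Finite V] {F : Finset (Sym2 V)}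
    (hF : IsSpanningTreeEdges (F : Set (Sym2 V))) : F.card + 1 = Nat.card V :=
  ((isSpanningTreeEdges_iff_connected_and_card hF.1).mp hF).2

theorem IsSpanningTreeEdges.exists_mem_notMem [Finite V] {F F' : Finset (Sym2 V)}
    (hF : IsSpanningTreeEdges (F : Set (Sym2 V))) (hF' : IsSpanningTreeEdges (F' : Set (Sym2 V)))
    (hne : F ≠ F') : ∃ e ∈ F, e ∉ F' :=
  Finset.not_subset.mp fun h =>
    hne (Finset.eq_of_subset_of_card_le h (by linarith [hF.card_add_one, hF'.card_add_one]))

variable [DecidableEq V]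

theorem fromEdgeSet_coe_erase (T : Finset (Sym2 V)) (e : Sym2 V) :
    fromEdgeSet ↑(T.erase e) = (fromEdgeSet (T : Set (Sym2 V))).deleteEdges {e} := by
  rw [Finset.coe_erase, fromEdgeSet_sdiff]
  rfl

theorem IsSpanningTreeEdges.insert_erase [Finite V] {T : Finset (Sym2 V)}
    (hT : IsSpanningTreeEdges (T : Set (Sym2 V))) {x y u v : V} (hxy : s(x, y) ∈ T)
    (hxu : ((fromEdgeSet (T : Set (Sym2 V))).deleteEdges {s(x, y)}).Reachable x u)
    (hyv : ((fromEdgeSet (T : Set (Sym2 V))).deleteEdges {s(x, y)}).Reachable y v) (huv : u ≠ v)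
    (hnew : s(u, v) ∉ T.erase s(x, y)) :
    IsSpanningTreeEdges (↑(insert s(u, v) (T.erase s(x, y))) : Set (Sym2 V)) := by
  set G₁ := fromEdgeSet (↑(insert s(u, v) (T.erase s(x, y))) : Set (Sym2 V))
  have hle : (fromEdgeSet (T : Set (Sym2 V))).deleteEdges {s(x, y)} ≤ G₁ :=
    fromEdgeSet_coe_erase T _ ▸ fromEdgeSet_mono (by simp)
  have huv₁ : G₁.Adj u v := ⟨by simp, huv⟩
  have hdiag : ∀ e ∈ (↑(insert s(u, v) (T.erase s(x, y))) : Set (Sym2 V)), ¬ e.IsDiag := by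
    intro e he
    rcases Finset.mem_insert.mp he with rfl | he
    · exact fun h => huv (Sym2.mk_isDiag_iff.mp h)
    · exact hT.1 e (Finset.mem_of_mem_erase he)
  refine (isSpanningTreeEdges_iff_connected_and_card hdiag).mpr ⟨?_, ?_⟩
  · refine (connected_iff_exists_forall_reachable _).mpr ⟨x, fun z => ?_⟩
    rcases (hT.2.connected x z).deleteEdges_or with h | h
    · exact h.mono hle
    · exact (hxu.mono hle).trans (huv₁.reachable.trans ((hyv.symm.trans h).mono hle))
  · rw [Finset.card_insert_of_notMem hnew, Finset.card_erase_add_one hxy, hT.card_add_one]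

theorem IsSpanningTreeEdges.exists_exchange [Finite V] {T : Finset (Sym2 V)}
    (hT : IsSpanningTreeEdges (T : Set (Sym2 V))) {x y : V} (hxy : s(x, y) ∈ T)
    {H : SimpleGraph V} (p : H.Walk x y) :
    ∃ f ∈ p.edges, f ∉ T.erase s(x, y) ∧
      IsSpanningTreeEdges (↑(insert f (T.erase s(x, y))) : Set (Sym2 V)) := by
  set G₀ := (fromEdgeSet (T : Set (Sym2 V))).deleteEdges {s(x, y)}
  have hne : x ≠ y := fun h => hT.1 _ hxy (Sym2.mk_isDiag_iff.mpr h)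
  have hsep : ¬ G₀.Reachable x y :=
    isBridge_iff.mp (isAcyclic_iff_forall_adj_isBridge.mp hT.2.isAcyclic ⟨hxy, hne⟩)
  obtain ⟨⟨⟨u, v⟩, huv⟩, hdart, hu, hv⟩ :=
    p.exists_boundary_dart {z | G₀.Reachable x z} .rfl hsep
  have hnew : s(u, v) ∉ T.erase s(x, y) := fun h =>
    hv (hu.trans (Adj.reachable (G := G₀)
      ⟨⟨Finset.mem_of_mem_erase h, huv.ne⟩, fun h' => Finset.ne_of_mem_erase h h'.1⟩))
  have hyv : G₀.Reachable y v := ((hT.2.connected x v).deleteEdges_or).resolve_left hv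
  exact ⟨s(u, v), List.mem_map_of_mem hdart, hnew, hT.insert_erase hxy hu hyv huv.ne hnew⟩

end SpanningTree

section Weights

variable {V : Type} {d : V → V → ℝ}

theorem sym2Weight_mk (hsymm : ∀ x y, d x y = d y x) (a b : V) :
    sym2Weight d s(a, b) = d a b := by
  change (d a b + d b a) / 2 = d a b
  rw [hsymm b a]
  ring

theorem edgesWeight_insert_erase [DecidableEq V] {T : Finset (Sym2 V)} {e f : Sym2 V}
    (he : e ∈ T) (hf : f ∉ T.erase e) :
    edgesWeight d (insert f (T.erase e)) = edgesWeight d T - sym2Weight d e + sym2Weight d f := by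
  rw [edgesWeight, edgesWeight, Finset.sum_insert hf, Finset.sum_erase_eq_sub he]
  ring

variable {G : SimpleGraph V}

theorem dist_lt_of_no_local_improvement (hsymm : ∀ x y, d x y = d y x) (hdd : DistinctDists d)
    (hno : ∀ u v w, G.Adj v u → G.Adj v w → ¬ (d u v < d v w ∧ d u w < d v w))
    {v a b : V} (ha : G.Adj v a) (hb : G.Adj v b) (hab : a ≠ b) : d v a < d a b := by
  have hva_ab : d v a ≠ d a b := fun h => by
    rcases Sym2.eq_iff.mp (hdd v a a b ha.ne hab h) with ⟨h, -⟩ | ⟨h, -⟩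
    exacts [ha.ne h, hb.ne h]
  have hva_vb : d v a ≠ d v b := fun h => by
    rcases Sym2.eq_iff.mp (hdd v a v b ha.ne hb.ne h) with ⟨-, h⟩ | ⟨h, -⟩
    exacts [hab h, hb.ne h]
  by_contra! h
  rcases hva_vb.lt_or_gt with h' | h'
  · exact hno a v b ha hb ⟨by rwa [hsymm], by linarith [h.lt_of_ne' hva_ab]⟩
  · exact hno b v a hb ha ⟨by rwa [hsymm], by rw [hsymm]; exact h.lt_of_ne' hva_ab⟩

theorem sym2Weight_lt_of_isPath (hsymm : ∀ x y, d x y = d y x)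
    (hfour : ∀ a b c e, d a c + d b e ≤ max (d a b + d c e) (d a e + d b c))
    (hloc : ∀ {v a b}, G.Adj v a → G.Adj v b → a ≠ b → d v a < d a b) :
    ∀ {x y : V} (p : G.Walk x y), p.IsPath → 2 ≤ p.length →
      d p.snd y < d x y ∧ ∀ e ∈ p.edges, sym2Weight d e < d x y
  | _, _, .nil, _, h => by simp at h
  | _, _, .cons _ .nil, _, h => by simp at h
  | x, y, .cons (v := m) hxm (.cons (v := c) hmc q), hp, _ => by
    have hxc : x ≠ c := fun h => (Walk.cons_isPath_iff _ _).mp hp |>.2 (by simp [h])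
    have hxm_xc := hloc hxm.symm hmc hxc
    have hmc_xc := hloc hmc hxm.symm hxc.symm
    rw [hsymm m x] at hxm_xc
    rw [hsymm c x] at hmc_xc
    have key : d x c ≤ d x y ∧ d m y < d x y ∧
        ∀ e ∈ (Walk.cons hmc q).edges, sym2Weight d e < d x y := by
      cases q with
      | nil => simpa [sym2Weight_mk hsymm] using hmc_xc
      | cons hcn r =>
        obtain ⟨hcy, hedges⟩ := sym2Weight_lt_of_isPath hsymm hfour hloc _ hp.of_cons (by simp)
        have hmc_my : d m c < d m y := by simpa [sym2Weight_mk hsymm] using hedges s(m, c)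
        simp only [Walk.snd_cons] at hcy
        obtain ⟨hxc, hmy⟩ : d x c < d x y ∧ d m y < d x y := by
          rcases le_max_iff.mp (hfour x m c y) with h | h
          · exfalso
            linarith
          · constructor <;> linarith
        exact ⟨hxc.le, hmy, fun e he => (hedges e he).trans hmy⟩
    obtain ⟨hxc_xy, hmy, htail⟩ := key
    refine ⟨hmy, ?_⟩
    rw [Walk.edges_cons, List.forall_mem_cons, sym2Weight_mk hsymm]
    exact ⟨by linarith, htail⟩
  termination_by _ _ p => p.length

end Weights

theorem suboptimal_mst_has_local_improvement_general {V : Type} [Fintype V] [DecidableEq V]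
    (d : V → V → ℝ) (htm : IsTreeMetric d) (hdd : DistinctDists d)
    (E : Set (Sym2 V))
    (M : Finset (Sym2 V)) (hM : IsMSTOver d E M)
    (Mg : Finset (Sym2 V)) (hMg : IsMSTOver d Set.univ Mg)
    (hsub : edgesWeight d Mg < edgesWeight d M) :
    ∃ u v w : V, (d u v < d v w ∧ d u w < d v w) ∧ s(v, u) ∈ M ∧ s(v, w) ∈ M := by
  by_contra! hno
  set G := fromEdgeSet (M : Set (Sym2 V))
  have hloc {v a b : V} (ha : G.Adj v a) (hb : G.Adj v b) (hab : a ≠ b) : d v a < d a b :=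
    dist_lt_of_no_local_improvement (G := G) htm.symm hdd
      (fun u v w hu hw h => hno u v w h hu.1 hw.1) ha hb hab
  obtain ⟨e, heMg, heM⟩ := hMg.2.1.exists_mem_notMem hM.2.1 (by rintro rfl; exact hsub.false)
  cases e with | h x y =>
  obtain ⟨p, hp⟩ := hM.2.1.2.connected.exists_isPath x y
  have hlen : 2 ≤ p.length := by
    have h0 : p.length ≠ 0 := fun h =>
      hMg.2.1.1 _ heMg (Sym2.mk_isDiag_iff.mpr (Walk.eq_of_length_eq_zero h))
    have h1 : p.length ≠ 1 := fun h => heM (Walk.adj_of_length_eq_one h).1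
    omega
  obtain ⟨f, hfp, hfT, htree⟩ := hMg.2.1.exists_exchange heMg p
  have hf := (sym2Weight_lt_of_isPath htm.symm htm.four_point hloc p hp hlen).2 f hfp
  have hmin := hMg.2.2 _ (Set.subset_univ _) htree
  rw [edgesWeight_insert_erase heMg hfT, sym2Weight_mk htm.symm] at hmin
  linarith

/-- Let `M` be the MST of a connected edge set `E` over a tree metric with
pairwise distinct distances.  If the weight of `M` exceeds the weight of the MST over the
complete graph on `V`, then there are vertices `u, v, w` with `u ≺ (v,w)`, `{v,u} ∈ M`
and `{v,w} ∈ M`. -/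
theorem suboptimal_mst_has_local_improvement {V : Type} [Fintype V] [DecidableEq V]
    (d : V → V → ℝ) (htm : IsTreeMetric d) (hdd : DistinctDists d)
    (E : Set (Sym2 V)) (hconn : (SimpleGraph.fromEdgeSet E).Connected)
    (M : Finset (Sym2 V)) (hM : IsMSTOver d E M)
    (Mg : Finset (Sym2 V)) (hMg : IsMSTOver d Set.univ Mg)
    (hsub : edgesWeight d Mg < edgesWeight d M) :
    ∃ u v w : V, (d u v < d v w ∧ d u w < d v w) ∧ s(v, u) ∈ M ∧ s(v, w) ∈ M :=
  suboptimal_mst_has_local_improvement_general d htm hdd E M hM Mg hMg hsub
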